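/- Assume φ : A → ℝ takes only nonnegative values and φ⁻¹({0}) ≠ ∅. Then φ is conserved by F if and only if for every shift-invariant Borel probability measure μ on A^{ℤ^D}, ∫ φ(a(0)) dμ(a) = ∫ φ(F(a)(0)) dμ(a). -/

import Mathlib

/-!
If `φ` is conserved: by shift invariance, `|S|` times the difference of the two integrals is
the integral of `∑ x ∈ S, (φ (F a x) - φ (a x))`, for any finite window `S`. This sum only sees
`a` near `S`, so `a` may be truncated to the vacuum far from `S`; conservation for the truncation
bounds the sum by a multiple of the number of cells near the boundary of `S`, which is `o(|S|)`
for the boxes `[-n, n]^D`.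

Conversely, the uniform measure on the translates of an `N`-periodic configuration is
shift-invariant, so `φ` is conserved by the automaton run on the torus `(ℤ/N)^D`. As `φ ≥ 0`,
on a torus into which the neighbourhood embeds this says that a cell with vacuum neighbourhood
stays vacuum. A finitely supported configuration is then wrapped onto a torus large enough to
hold its support and that of its image, where conservation on the torus is conservation for it.
-/

open MeasureTheory

/-- The cellular automaton induced by a local rule `f` on neighbourhood `B`. -/
def induce {X A : Type*} [AddCommGroup X] (B : Finset X) (f : (B → A) → A)
    (a : X → A) : X → A :=
  fun x => f fun b => a (x + b.1)

/-- `ψ` is conserved by the CA induced by `f` on `B`. -/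
def conserved {X A Z : Type*} [AddCommGroup X] [AddCommMonoid Z] (B : Finset X)
    (f : (B → A) → A) (ψ : A → Z) : Prop :=
  (∃ a : A, ψ a = 0) ∧
  (∀ a : X → A, (Function.support fun x => ψ (a x)).Finite →
      (Function.support fun x => ψ (induce B f a x)).Finite) ∧
  (∀ a : X → A, (Function.support fun x => ψ (a x)).Finite →
      ∑ᶠ x, ψ (induce B f a x) = ∑ᶠ x, ψ (a x))

open Filter Topology
open scoped ENNReal Finset

lemma integral_inv_card_smul_sum_dirac {Ω ι : Type*} [MeasurableSpace Ω] [Fintype ι]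
    (c : ι → Ω) {g : Ω → ℝ} (hg : Measurable g) :
    ∫ ω, g ω ∂((Fintype.card ι : ℝ≥0∞)⁻¹ • ∑ t, Measure.dirac (c t)) =
      (Fintype.card ι : ℝ)⁻¹ * ∑ t, g (c t) := by
  have hint : ∀ t ∈ Finset.univ, Integrable g (Measure.dirac (c t)) := fun t _ =>
    integrable_dirac' hg.stronglyMeasurable enorm_lt_top
  rw [integral_smul_measure, integral_finsetSum_measure hint]
  simp [integral_dirac' _ _ hg.stronglyMeasurable]

lemma isProbabilityMeasure_inv_card_smul_sum_dirac {Ω ι : Type*} [MeasurableSpace Ω]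
    [Fintype ι] [Nonempty ι] (c : ι → Ω) :
    IsProbabilityMeasure ((Fintype.card ι : ℝ≥0∞)⁻¹ • ∑ t, Measure.dirac (c t)) := by
  constructor
  simp [ENNReal.inv_mul_cancel]

lemma abs_sum_le_card_mul {ι : Type*} (s : Finset ι) {g : ι → ℝ} {M : ℝ}
    (hg : ∀ i, |g i| ≤ M) : |∑ i ∈ s, g i| ≤ #s * M := by
  simpa using norm_sum_le_of_le s fun i _ => (Real.norm_eq_abs (g i)).trans_le (hg i)

/-- The pattern on `G` showing `a` through `π` on `W` and `v` off `π '' W` (meaningful when `π`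
is injective on `W`). -/
noncomputable def foldPattern {X A G : Type*} (π : X → G) (W : Set X) (a : X → A) (v : A) :
    G → A :=
  Function.extend (W.domRestrict π) (W.domRestrict a) fun _ => v

lemma foldPattern_apply_of_mem {X A G : Type*} {π : X → G} {W : Set X} (a : X → A) (v : A)
    (hπ : W.InjOn π) {w : X} (hw : w ∈ W) : foldPattern π W a v (π w) = a w :=
  (Set.injOn_iff_injective.1 hπ).extend_apply _ _ ⟨w, hw⟩

lemma foldPattern_apply_of_notMem {X A G : Type*} {π : X → G} {W : Set X} (a : X → A) (v : A)
    {t : G} (ht : t ∉ π '' W) : foldPattern π W a v t = v :=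
  Function.extend_apply' _ _ _ fun ⟨w, hw⟩ => ht ⟨w, w.2, hw⟩

lemma sum_foldPattern {X A G M : Type*} [Fintype G] [AddCommMonoid M] {π : X → G}
    {W : Finset X} (a : X → A) {v : A} (hπ : Set.InjOn π W) {g : A → M} (hv : g v = 0) :
    ∑ t, g (foldPattern π W a v t) = ∑ w ∈ W, g (a w) := by
  classical
  rw [← Finset.sum_subset (Finset.subset_univ (W.image π)) fun t _ ht => by
      rw [foldPattern_apply_of_notMem a v (by simpa using ht), hv],
    Finset.sum_image hπ]
  exact Finset.sum_congr rfl fun w hw => by rw [foldPattern_apply_of_mem a v hπ hw]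

section Automaton

variable {X A : Type*} [AddCommGroup X]

def MeanConserved [MeasurableSpace A] (B : Finset X) (f : (B → A) → A) (φ : A → ℝ) :
    Prop :=
  ∀ μ : Measure (X → A), IsProbabilityMeasure μ →
    (∀ x : X, Measure.map (fun a y => a (y + x)) μ = μ) →
    ∫ a, φ (a 0) ∂μ = ∫ a, φ (induce B f a 0) ∂μ

def PreservesVacuum (B : Finset X) (f : (B → A) → A) (φ : A → ℝ) : Prop :=
  ∀ (u : X → A) (x : X), (∀ b ∈ B, φ (u (x + b)) = 0) → φ (induce B f u x) = 0

lemma induce_shift (B : Finset X) (f : (B → A) → A) (a : X → A) (x y : X) :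
    induce B f (fun z => a (z + y)) x = induce B f a (x + y) := by
  simp only [induce, add_right_comm]

lemma measurable_shift [MeasurableSpace A] (y : X) : Measurable fun (a : X → A) z => a (z + y) :=
  measurable_pi_lambda _ fun _ => measurable_pi_apply _

lemma measurable_induce_apply [MeasurableSpace A] [DiscreteMeasurableSpace A] [Countable A]
    (B : Finset X) (f : (B → A) → A) (x : X) :
    Measurable fun a : X → A => induce B f a x :=
  Measurable.of_discrete.comp (measurable_pi_lambda _ fun _ => measurable_pi_apply _)

variable {B : Finset X} {f : (B → A) → A} {φ : A → ℝ}

lemma PreservesVacuum.support_subset (hvac : PreservesVacuum B f φ) {a : X → A} {T : Set X}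
    (hT : ∀ x, ∀ b ∈ B, φ (a (x + b)) ≠ 0 → x ∈ T) :
    (Function.support fun x => φ (induce B f a x)) ⊆ T := fun x hx => by
  by_contra hxT
  exact hx (hvac a x fun b hb => by_contra fun h => hxT (hT x b hb h))

lemma conserved.apply_const_eq_zero (hc : conserved B f φ) {v : A} (hv : φ v = 0) :
    φ (f fun _ => v) = 0 := by
  -- otherwise `induce B f (fun _ => v)` has full support, so `X` is finite and
  -- `∑ᶠ x, φ (f fun _ => v) = Nat.card X • φ (f fun _ => v)` cannot vanish
  by_contra hne
  have hfin := hc.2.1 (fun _ => v) (by simp [hv])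
  have hsum := hc.2.2 (fun _ => v) (by simp [hv])
  have hsupp : (Function.support fun x : X => φ (induce B f (fun _ => v) x)) = Set.univ :=
    Set.eq_univ_of_forall fun _ => hne
  rw [hsupp, Set.finite_univ_iff] at hfin
  have := Fintype.ofFinite X
  simp [finsum_eq_sum_of_fintype, induce, hv, hne] at hsum

/-- Truncating `a` to the vacuum outside `T` makes it finitely supported without changing
`induce B f a` on `S`; conservation of the truncation leaves only the cells of `U \ S`. -/
lemma conserved.abs_sum_sub_le (hc : conserved B f φ) {M : ℝ} (hM : ∀ a, |φ a| ≤ M)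
    {S T U : Finset X} (hST : S ⊆ T) (hTU : T ⊆ U) (hSB : ∀ x ∈ S, ∀ b ∈ B, x + b ∈ T)
    (hUB : ∀ x, ∀ b ∈ B, x + b ∈ T → x ∈ U) (a : X → A) :
    |∑ x ∈ S, (φ (induce B f a x) - φ (a x))| ≤ 2 * M * (#U - #S) := by
  classical
  obtain ⟨v, hv⟩ := hc.1
  set a' : X → A := fun y => if y ∈ T then a y else v
  have ha' : (Function.support fun x => φ (a' x)) ⊆ T := fun x hx => by
    by_contra hxT
    exact hx (by simp [a', Finset.mem_coe.not.1 hxT, hv])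
  have hFa' : (Function.support fun x => φ (induce B f a' x)) ⊆ U := fun x hx => by
    by_contra hxU
    refine hx ?_
    have hout : ∀ b : B, a' (x + b) = v := fun b => if_neg fun h => hxU (hUB x b b.2 h)
    simp only [induce, hout, hc.apply_const_eq_zero hv]
  have hcons := hc.2.2 a' (T.finite_toSet.subset ha')
  rw [finsum_eq_sum_of_support_subset _ hFa', finsum_eq_sum_of_support_subset _ ha'] at hcons
  have hS : ∀ x ∈ S, φ (induce B f a x) - φ (a x) = φ (induce B f a' x) - φ (a' x) :=
    fun x hx => by simp [a', induce, hST hx, hSB x hx _ (Finset.coe_mem _)]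
  have hdiff : ∑ x ∈ S, (φ (induce B f a x) - φ (a x)) =
      ∑ x ∈ T \ S, φ (a' x) - ∑ x ∈ U \ S, φ (induce B f a' x) := by
    rw [Finset.sum_congr rfl hS, Finset.sum_sub_distrib, Finset.sum_sdiff_eq_sub hST,
      Finset.sum_sdiff_eq_sub (hST.trans hTU), hcons]
    ring
  have hcardT : (#(T \ S) : ℝ) ≤ #U - #S := by
    rw [Finset.card_sdiff_of_subset hST, Nat.cast_sub (Finset.card_le_card hST)]
    gcongr
  have hcardU : (#(U \ S) : ℝ) = #U - #S := by
    rw [Finset.card_sdiff_of_subset (hST.trans hTU),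
      Nat.cast_sub (Finset.card_le_card (hST.trans hTU))]
  have hM0 : 0 ≤ M := (abs_nonneg _).trans (hM v)
  rw [hdiff]
  calc _ ≤ |∑ x ∈ T \ S, φ (a' x)| + |∑ x ∈ U \ S, φ (induce B f a' x)| := abs_sub _ _
    _ ≤ #(T \ S) * M + #(U \ S) * M :=
        add_le_add (abs_sum_le_card_mul _ fun _ => hM _) (abs_sum_le_card_mul _ fun _ => hM _)
    _ ≤ 2 * M * (#U - #S) := by nlinarith

lemma integral_comp_shift [MeasurableSpace A] {μ : Measure (X → A)}
    (hμ : ∀ x : X, Measure.map (fun a y => a (y + x)) μ = μ) (x : X) {g : (X → A) → ℝ}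
    (hg : Measurable g) : ∫ a, g (fun y => a (y + x)) ∂μ = ∫ a, g a ∂μ := by
  conv_rhs => rw [← hμ x]
  rw [integral_map (measurable_shift x).aemeasurable hg.aestronglyMeasurable]

variable [MeasurableSpace A] [DiscreteMeasurableSpace A] [Countable A]

lemma conserved.card_mul_abs_integral_sub_le (hc : conserved B f φ) {M : ℝ}
    (hM : ∀ a, |φ a| ≤ M) (μ : Measure (X → A)) [IsProbabilityMeasure μ]
    (hμ : ∀ x : X, Measure.map (fun a y => a (y + x)) μ = μ)
    {S T U : Finset X} (hST : S ⊆ T) (hTU : T ⊆ U) (hSB : ∀ x ∈ S, ∀ b ∈ B, x + b ∈ T)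
    (hUB : ∀ x, ∀ b ∈ B, x + b ∈ T → x ∈ U) :
    #S * |∫ a, φ (induce B f a 0) ∂μ - ∫ a, φ (a 0) ∂μ| ≤ 2 * M * (#U - #S) := by
  have hmeas : ∀ x, Measurable fun a : X → A => φ (induce B f a x) - φ (a x) := fun x =>
    (Measurable.of_discrete.comp (measurable_induce_apply B f x)).sub
      (Measurable.of_discrete.comp (measurable_pi_apply x))
  have hint : ∀ x, Integrable (fun a : X → A => φ (induce B f a x) - φ (a x)) μ := fun x =>
    Integrable.of_bound (hmeas x).aestronglyMeasurable (2 * M) (ae_of_all _ fun a =>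
      (abs_sub _ _).trans (by linarith [hM (induce B f a x), hM (a x)]))
  have hsite : ∀ x, ∫ a, (φ (induce B f a x) - φ (a x)) ∂μ =
      ∫ a, φ (induce B f a 0) ∂μ - ∫ a, φ (a 0) ∂μ := fun x => by
    have hbdd : ∀ c : (X → A) → A, Measurable c → Integrable (fun a => φ (c a)) μ :=
      fun c hc => Integrable.of_bound (Measurable.of_discrete.comp hc).aestronglyMeasurable M
        (ae_of_all _ fun a => hM (c a))
    rw [← integral_sub (hbdd _ (measurable_induce_apply B f 0)) (hbdd _ (measurable_pi_apply 0)),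
      ← integral_comp_shift hμ x (hmeas 0)]
    simp [induce_shift]
  have hbound := norm_integral_le_of_norm_le_const (μ := μ)
    (ae_of_all _ fun a => (Real.norm_eq_abs _).trans_le (hc.abs_sum_sub_le hM hST hTU hSB hUB a))
  rw [integral_finsetSum _ fun x _ => hint x, Finset.sum_congr rfl fun x _ => hsite x] at hbound
  simpa [← mul_sub, abs_mul] using hbound

/-- The uniform measure on a family of configurations permuted by the shifts is
shift-invariant. -/
lemma MeanConserved.sum_apply_induce_eq (H : MeanConserved B f φ)
    {ι : Type*} [Fintype ι] [Nonempty ι] (c : ι → X → A) (e : X → ι ≃ ι)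
    (he : ∀ y t, (fun x => c t (x + y)) = c (e y t)) :
    ∑ t, φ (induce B f (c t) 0) = ∑ t, φ (c t 0) := by
  set μ : Measure (X → A) := (Fintype.card ι : ℝ≥0∞)⁻¹ • ∑ t, Measure.dirac (c t)
  have hinv : ∀ y, μ.map (fun a z => a (z + y)) = μ := fun y => by
    rw [Measure.map_smul, Measure.map_finset_sum (measurable_shift y).aemeasurable]
    simp only [Measure.map_dirac' (measurable_shift y), he]
    rw [Equiv.sum_comp (e y) fun t => Measure.dirac (c t)]
  have h := H μ (isProbabilityMeasure_inv_card_smul_sum_dirac c) hinv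
  rw [integral_inv_card_smul_sum_dirac c (g := fun a => φ (a 0))
      (Measurable.of_discrete.comp (measurable_pi_apply 0)),
    integral_inv_card_smul_sum_dirac c (g := fun a => φ (induce B f a 0))
      (Measurable.of_discrete.comp (measurable_induce_apply B f 0))] at h
  exact (mul_left_cancel₀ (by simp) h).symm

variable {G : Type*} [AddCommGroup G] [Fintype G]

/-- Conservation on the finite quotient `G`, seen through the `G`-periodic configurations. -/
lemma MeanConserved.sum_apply_quotient_eq (H : MeanConserved B f φ) (π : X →+ G) (p : G → A) :
    ∑ t, φ (f fun b => p (t + π b)) = ∑ t, φ (p t) := by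
  have h := H.sum_apply_induce_eq (fun t x => p (t + π x)) (fun y => Equiv.addRight (π y))
    fun y t => by ext x; simp only [map_add, Equiv.coe_addRight, add_assoc, add_comm (π x)]
  simpa [induce] using h

lemma MeanConserved.preservesVacuum_of_injOn (H : MeanConserved B f φ)
    (hpos : ∀ a, 0 ≤ φ a) {v : A} (hv : φ v = 0) (π : X →+ G) (hπ : Set.InjOn π B) :
    PreservesVacuum B f φ := by
  intro u x hu
  have hp : ∀ t, φ (foldPattern π B (fun b => u (x + b)) v t) = 0 := fun t => by
    by_cases ht : t ∈ π '' B
    · obtain ⟨b, hb, rfl⟩ := ht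
      rw [foldPattern_apply_of_mem _ _ hπ hb]
      exact hu b hb
    · rw [foldPattern_apply_of_notMem _ _ ht, hv]
  have hsum := H.sum_apply_quotient_eq π (foldPattern π B (fun b => u (x + b)) v)
  simp only [hp, Finset.sum_const_zero] at hsum
  have h0 := (Finset.sum_eq_zero_iff_of_nonneg fun t _ => hpos _).1 hsum 0 (Finset.mem_univ _)
  simpa [induce, foldPattern_apply_of_mem _ _ hπ] using h0

/-- `a` is wrapped onto `G` along `W`: at the cells of `π '' T` the automaton on `G` sees
exactly `a`, and everywhere else only vacuum. -/
lemma MeanConserved.finsum_apply_induce_eq (H : MeanConserved B f φ)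
    (hvac : PreservesVacuum B f φ) {v : A} (hv : φ v = 0) (π : X →+ G) {a : X → A}
    {T W : Finset X} (hW : (Function.support fun x => φ (a x)) ⊆ W) (hTW : T ⊆ W)
    (hTB : ∀ x ∈ T, ∀ b ∈ B, x + b ∈ W)
    (hT : ∀ x, ∀ b ∈ B, φ (a (x + b)) ≠ 0 → x ∈ T)
    (hπ : Set.InjOn π W) :
    ∑ᶠ x, φ (induce B f a x) = ∑ᶠ x, φ (a x) := by
  classical
  have hpa : ∀ x ∈ T, (f fun b => foldPattern π W a v (π x + π b)) = induce B f a x := by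
    intro x hx
    simp only [induce, ← map_add,
      foldPattern_apply_of_mem a v hπ (hTB x hx _ (Finset.coe_mem _))]
  have hvanish : ∀ t ∉ T.image π, φ (f fun b => foldPattern π W a v (t + π b)) = 0 := by
    intro t ht
    have hnbhd : ∀ b ∈ B, φ (foldPattern π W a v (t + π b)) = 0 := fun b hb => by
      by_cases hw : t + π b ∈ π '' W
      · obtain ⟨w, hw, hwt⟩ := hw
        rw [← hwt, foldPattern_apply_of_mem a v hπ hw]
        by_contra hne
        refine ht (Finset.mem_image.2 ⟨w - b, hT _ b hb (by simpa using hne), ?_⟩)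
        rw [map_sub, hwt, add_sub_cancel_right]
      · rw [foldPattern_apply_of_notMem a v hw, hv]
    simpa [induce] using
      hvac (fun x => foldPattern π W a v (t + π x)) 0 (by simpa using hnbhd)
  rw [finsum_eq_sum_of_support_subset _ (hvac.support_subset (T := T) hT),
    finsum_eq_sum_of_support_subset _ hW, ← sum_foldPattern a hπ hv,
    ← H.sum_apply_quotient_eq π (foldPattern π W a v),
    ← Finset.sum_subset (Finset.subset_univ (T.image π)) fun t _ ht => hvanish t ht,
    Finset.sum_image (hπ.mono (by simpa using hTW))]
  exact Finset.sum_congr rfl fun x hx => by rw [hpa x hx]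

end Automaton

section Box

variable {D : ℕ}

noncomputable def box (D r : ℕ) : Finset (Fin D → ℤ) :=
  Fintype.piFinset fun _ => Finset.Icc (-(r : ℤ)) r

lemma mem_box {r : ℕ} {x : Fin D → ℤ} : x ∈ box D r ↔ ∀ i, |x i| ≤ r := by
  simp [box, abs_le]

lemma card_box (D r : ℕ) : #(box D r) = (2 * r + 1) ^ D := by
  simp only [box, Fintype.card_piFinset, Int.card_Icc, Finset.prod_const, Finset.card_univ,
    Fintype.card_fin]
  congr 1
  omega

lemma box_mono {r s : ℕ} (h : r ≤ s) : box D r ⊆ box D s := fun x hx =>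
  mem_box.2 fun i => (mem_box.1 hx i).trans (by exact_mod_cast h)

lemma add_mem_box {r s : ℕ} {x y : Fin D → ℤ} (hx : x ∈ box D r) (hy : y ∈ box D s) :
    x + y ∈ box D (r + s) :=
  mem_box.2 fun i => (abs_add_le _ _).trans <| by
    push_cast
    exact add_le_add (mem_box.1 hx i) (mem_box.1 hy i)

lemma sub_mem_box {r s : ℕ} {x y : Fin D → ℤ} (hx : x ∈ box D r) (hy : y ∈ box D s) :
    x - y ∈ box D (r + s) := by
  rw [sub_eq_add_neg]
  exact add_mem_box hx (mem_box.2 fun i => by simpa using mem_box.1 hy i)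

lemma exists_subset_box {S : Set (Fin D → ℤ)} (hS : S.Finite) : ∃ r, S ⊆ box D r := by
  refine ⟨hS.toFinset.sup fun x => Finset.univ.sup fun i => (x i).natAbs, fun x hx => ?_⟩
  refine mem_box.2 fun i => ?_
  rw [Int.abs_eq_natAbs, Nat.cast_le]
  exact (Finset.le_sup (f := fun i => (x i).natAbs) (Finset.mem_univ i)).trans
    (Finset.le_sup (f := fun x => Finset.univ.sup fun i => (x i).natAbs) (hS.mem_toFinset.2 hx))

lemma injOn_box (D r : ℕ) :
    Set.InjOn ((Int.castAddHom (ZMod (2 * r + 1))).compLeft (Fin D)) (box D r) := by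
  intro x hx y hy hxy
  funext i
  have hi : ((x i : ℤ) : ZMod (2 * r + 1)) = y i := congrFun hxy i
  rw [ZMod.intCast_eq_intCast_iff_dvd_sub] at hi
  have hx' := abs_le.1 (mem_box.1 hx i)
  have hy' := abs_le.1 (mem_box.1 hy i)
  have := Int.eq_zero_of_abs_lt_dvd hi
    (abs_lt.2 ⟨by push_cast; linarith, by push_cast; linarith⟩)
  linarith

lemma tendsto_card_box_add_div (D k : ℕ) :
    Tendsto (fun n : ℕ => (#(box D (n + k)) : ℝ) / #(box D n)) atTop (𝓝 1) := by
  have hlin : Tendsto (fun n : ℕ => 1 + 2 * (k : ℝ) / (2 * n + 1)) atTop (𝓝 1) := by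
    simpa using tendsto_const_nhds.add (tendsto_const_nhds.div_atTop
      (tendsto_atTop_add_const_right _ 1
        ((tendsto_natCast_atTop_atTop (R := ℝ)).const_mul_atTop two_pos)))
  have hpow := hlin.pow D
  rw [one_pow] at hpow
  refine hpow.congr fun n => ?_
  rw [card_box, card_box, Nat.cast_pow, Nat.cast_pow, ← div_pow]
  congr 1
  field_simp
  push_cast
  ring

end Box

section Lattice

variable {A : Type*} [MeasurableSpace A] [DiscreteMeasurableSpace A] [Countable A] {D : ℕ}
  {B : Finset (Fin D → ℤ)} {f : (B → A) → A} {φ : A → ℝ}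

lemma conserved.meanConserved [Finite A] (hc : conserved B f φ) : MeanConserved B f φ := by
  intro μ _ hμ
  obtain ⟨m, hm⟩ := exists_subset_box B.finite_toSet
  obtain ⟨M, hM⟩ : ∃ M, ∀ a, |φ a| ≤ M :=
    (Set.finite_range fun a => |φ a|).bddAbove.imp fun _ hM a => hM (Set.mem_range_self a)
  set d := ∫ a, φ (induce B f a 0) ∂μ - ∫ a, φ (a 0) ∂μ
  have hd : ∀ n, |d| ≤ 2 * M * ((#(box D (n + m + m)) : ℝ) / #(box D n) - 1) := fun n => by
    have hpos : (0 : ℝ) < #(box D n) := by simp [card_box]; positivity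
    have h : (#(box D n) : ℝ) * |d| ≤ 2 * M * (#(box D (n + m + m)) - #(box D n)) :=
      hc.card_mul_abs_integral_sub_le hM μ hμ (box_mono (Nat.le_add_right n m))
        (box_mono (Nat.le_add_right _ m)) (fun x hx b hb => add_mem_box hx (hm hb))
        (fun x b hb h => by simpa using sub_mem_box h (hm hb))
    rw [div_sub_one hpos.ne', mul_div_assoc', le_div_iff₀ hpos]
    linarith
  have hlim : Tendsto (fun n : ℕ => 2 * M * ((#(box D (n + m + m)) : ℝ) / #(box D n) - 1))
      atTop (𝓝 0) := by
    simpa [add_assoc] using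
      ((tendsto_card_box_add_div D (m + m)).sub_const 1).const_mul (2 * M)
  have : |d| ≤ 0 := ge_of_tendsto' hlim hd
  exact (sub_eq_zero.1 (abs_nonpos_iff.1 this)).symm

lemma MeanConserved.preservesVacuum (H : MeanConserved B f φ)
    (hpos : ∀ a, 0 ≤ φ a) {v : A} (hv : φ v = 0) : PreservesVacuum B f φ :=
  have ⟨m, hm⟩ := exists_subset_box B.finite_toSet
  H.preservesVacuum_of_injOn hpos hv _ ((injOn_box D m).mono hm)

lemma MeanConserved.conserved (H : MeanConserved B f φ) (hpos : ∀ a, 0 ≤ φ a)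
    (hvac : ∃ a, φ a = 0) : conserved B f φ := by
  obtain ⟨v, hv⟩ := hvac
  have hpv := H.preservesVacuum hpos hv
  obtain ⟨m, hm⟩ := exists_subset_box B.finite_toSet
  have hT : ∀ {a : (Fin D → ℤ) → A} {k},
      (Function.support fun x => φ (a x)) ⊆ box D k →
      ∀ x, ∀ b ∈ B, φ (a (x + b)) ≠ 0 → x ∈ box D (k + m) := fun hk x b hb h => by
    simpa using sub_mem_box (hk h) (hm hb)
  refine ⟨⟨v, hv⟩, fun a ha => ?_, fun a ha => ?_⟩ <;>
    obtain ⟨k, hk⟩ := exists_subset_box ha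
  · exact (box D (k + m)).finite_toSet.subset (hpv.support_subset (hT hk))
  · exact H.finsum_apply_induce_eq hpv hv _
      (hk.trans (Finset.coe_subset.2 (box_mono (by omega))))
      (box_mono (Nat.le_add_right _ m)) (fun x hx b hb => add_mem_box hx (hm hb)) (hT hk)
      (injOn_box D (k + m + m))

end Lattice

theorem stmt7_general {A : Type*} [Fintype A]
    [MeasurableSpace A] [DiscreteMeasurableSpace A]
    {D : ℕ}
    (B : Finset (Fin D → ℤ))
    (f : (B → A) → A) (φ : A → ℝ)
    (hpos : ∀ a : A, 0 ≤ φ a) (hvac : ∃ a : A, φ a = 0) :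
    conserved B f φ ↔
      ∀ μ : Measure ((Fin D → ℤ) → A), IsProbabilityMeasure μ →
        (∀ x : Fin D → ℤ, Measure.map (fun a y => a (y + x)) μ = μ) →
        ∫ a, φ (a 0) ∂μ = ∫ a, φ (induce B f a 0) ∂μ :=
  ⟨conserved.meanConserved, fun H => MeanConserved.conserved H hpos hvac⟩

theorem stmt7 {A : Type*} [Fintype A] [Nonempty A]
    [MeasurableSpace A] [DiscreteMeasurableSpace A]
    {D : ℕ} (hD : 1 ≤ D)
    (B : Finset (Fin D → ℤ)) (hB0 : (0 : Fin D → ℤ) ∈ B)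
    (hBsym : ∀ b : Fin D → ℤ, b ∈ B ↔ -b ∈ B)
    (f : (B → A) → A) (φ : A → ℝ)
    (hpos : ∀ a : A, 0 ≤ φ a) (hvac : ∃ a : A, φ a = 0) :
    conserved B f φ ↔
      ∀ μ : Measure ((Fin D → ℤ) → A), IsProbabilityMeasure μ →
        (∀ x : Fin D → ℤ, Measure.map (fun a y => a (y + x)) μ = μ) →
        ∫ a, φ (a 0) ∂μ = ∫ a, φ (induce B f a 0) ∂μ :=
  stmt7_general B f φ hpos hvac
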